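/- arXiv:2403.10526 — 5 statements merged into one kernel-verified Lean document; each statement's English description precedes it below -/
import Mathlib

section
/- Let A be a unital C*-algebra, a ∈ A, and p, q projections in A such that a is invertible up to both (p,q) and (p,q'). Then q is Murray–von Neumann equivalent to q', i.e., there exists v ∈ A with vv* = q and v*v = q'. -/
variable {A : Type*} [NormedRing A] [StarRing A] [CStarRing A] [CompleteSpace A]
  [NormedAlgebra ℂ A] [StarModule ℂ A]

/-- `p` is a projection: self-adjoint idempotent. -/
def IsProjE (p : A) : Prop := p * p = p ∧ star p = p

/-- `a` is invertible up to the pair of projections `(p, q)`. -/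
def InvUpTo (a p q : A) : Prop :=
  ∃ b : A, b = (1 - p) * b * (1 - q) ∧ (1 - q) * a * (1 - p) * b = 1 - q ∧
    b * ((1 - q) * a * (1 - p)) = 1 - p

/-! With `c = a (1 - p)`, an inverse `b` of `a` up to `(p, q)` satisfies `c b c = c`, and the
idempotent `1 - c b` has the same range as `q`. For two such inverses `b`, `b'` the idempotents
`1 - c b` and `1 - c b'` have the same kernel. Idempotents with the same range, or with the same
kernel, are similar, so `q` and `q'` are similar. In a C*-algebra a similarity `S` with
`S q = q' S` can be replaced by its unitary part `u = S |S|⁻¹`, because `|S|` commutes with `q`;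
then `v = q u*` satisfies `v v* = q` and `v* v = u q u* = q'`. -/

section Ring

variable {R : Type*} [Ring R]

theorem isConj_of_mul_eq_right {x y : R} (hxy : x * y = y) (hyx : y * x = x) : IsConj x y := by
  have hxx : x * x = x := by nth_rewrite 2 [← hyx]; rw [← mul_assoc, hxy, hyx]
  have hyy : y * y = y := by nth_rewrite 2 [← hxy]; rw [← mul_assoc, hyx, hxy]
  refine ⟨⟨1 + x - y, 1 - x + y, ?_, ?_⟩, ?_⟩ <;>
    simp only [SemiconjBy, mul_add, add_mul, mul_sub, sub_mul, mul_one, one_mul, hxx, hyy, hxy,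
      hyx] <;> abel

theorem isConj_of_mul_eq_left {x y : R} (hxy : x * y = x) (hyx : y * x = y) : IsConj x y := by
  have hxx : x * x = x := by nth_rewrite 1 [← hxy]; rw [mul_assoc, hyx, hxy]
  have hyy : y * y = y := by nth_rewrite 1 [← hyx]; rw [mul_assoc, hxy, hyx]
  refine ⟨⟨1 - x + y, 1 + x - y, ?_, ?_⟩, ?_⟩ <;>
    simp only [SemiconjBy, mul_add, add_mul, mul_sub, sub_mul, mul_one, one_mul, hxx, hyy, hxy,
      hyx] <;> abel

theorem isConj_one_sub_of_one_sub_mul_eq {q e : R} (hqe : (1 - q) * e = 1 - q)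
    (heq : e * q = 0) : IsConj q (1 - e) := by
  refine isConj_of_mul_eq_right ?_ ?_
  · have hqe' : q * e = e - (1 - q) := by rw [← hqe]; noncomm_ring
    rw [mul_sub, mul_one, hqe']; abel
  · rw [sub_mul, one_mul, heq, sub_zero]

theorem isConj_one_sub_mul_of_mul_mul_eq {c b b' : R} (hb : c * b * c = c)
    (hb' : c * b' * c = c) : IsConj (1 - c * b) (1 - c * b') := by
  refine isConj_of_mul_eq_left ?_ ?_
  · rw [mul_sub, mul_one, sub_mul, one_mul, ← mul_assoc, hb]; abel
  · rw [mul_sub, mul_one, sub_mul, one_mul, ← mul_assoc, hb']; abel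

end Ring

theorem exists_mul_star_eq_and_star_mul_eq_of_mem_unitary {R : Type*} [Monoid R] [StarMul R]
    {u q q' : R} (hu : u ∈ unitary R) (hq : IsStarProjection q) (huq : u * q = q' * u) :
    ∃ v : R, v * star v = q ∧ star v * v = q' := by
  refine ⟨q * star u, ?_, ?_⟩
  · rw [star_mul, star_star, hq.isSelfAdjoint.star_eq, mul_assoc, ← mul_assoc (star u),
      Unitary.star_mul_self_of_mem hu, one_mul, hq.isIdempotentElem.eq]
  · rw [star_mul, star_star, hq.isSelfAdjoint.star_eq, mul_assoc, ← mul_assoc q,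
      hq.isIdempotentElem.eq, ← mul_assoc, huq, mul_assoc, Unitary.mul_star_self_of_mem hu,
      mul_one]

theorem exists_unitary_mul_eq_mul_of_isConj {B : Type*} [CStarAlgebra B] [PartialOrder B]
    [StarOrderedRing B] {q q' : B} (hq : IsSelfAdjoint q) (hq' : IsSelfAdjoint q')
    (h : IsConj q q') : ∃ u ∈ unitary B, u * q = q' * u := by
  obtain ⟨S, hS⟩ := h
  have hcomm : Commute (star (S : B) * S) q := by
    have hSstar : star (S : B) * q' = q * star (S : B) := by
      simpa [hq.star_eq, hq'.star_eq] using congrArg star hS.eq.symm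
    calc star (S : B) * S * q = star (S : B) * q' * S := by rw [mul_assoc, hS.eq, mul_assoc]
      _ = q * (star (S : B) * S) := by rw [hSstar, mul_assoc]
  obtain ⟨T, hT⟩ : IsUnit (CFC.abs (S : B)) :=
    (CFC.isUnit_sqrt_iff _).mpr (S.isUnit.star.mul S.isUnit)
  have hTq : Commute (T : B) q := hT ▸ hcomm.cfcₙ_nnreal _
  have hTinv_star : star (↑T⁻¹ : B) = ↑T⁻¹ := by
    have hT_star : star T = T := Units.ext <| by
      rw [Units.coe_star, hT, (CFC.abs_nonneg _).isSelfAdjoint.star_eq]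
    rw [← Units.coe_star_inv, hT_star]
  refine ⟨S * ↑T⁻¹, ?_, ?_⟩
  · refine (S.isUnit.mul T⁻¹.isUnit).mem_unitary_of_star_mul_self ?_
    rw [star_mul, hTinv_star, mul_assoc, ← mul_assoc (star _), ← CFC.abs_mul_abs, ← hT]
    simp
  · rw [mul_assoc, hTq.units_inv_left.eq, ← mul_assoc, hS.eq, mul_assoc]

theorem InvUpTo.exists_mul_mul_eq_and_isConj {R : Type*} [NormedRing R] {a p q : R}
    (hp : IsIdempotentElem p) (hq : IsIdempotentElem q) (h : InvUpTo a p q) :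
    ∃ b : R, a * (1 - p) * b * (a * (1 - p)) = a * (1 - p) ∧
      IsConj q (1 - a * (1 - p) * b) := by
  obtain ⟨b, hb, hab, hba⟩ := h
  have hbQ : b * (1 - q) = b := by
    conv_lhs => rw [hb]
    rw [mul_assoc, hq.one_sub.eq, ← hb]
  have hbc : b * (a * (1 - p)) = 1 - p := by
    simp only [← mul_assoc] at hba ⊢
    rwa [hbQ] at hba
  have hbq : b * q = 0 := by
    rw [← hbQ, mul_assoc, sub_mul, one_mul, hq.eq, sub_self, mul_zero]
  refine ⟨b, ?_, isConj_one_sub_of_one_sub_mul_eq ?_ ?_⟩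
  · rw [mul_assoc _ b, hbc, mul_assoc, hp.one_sub.eq]
  · simpa only [mul_assoc] using hab
  · rw [mul_assoc, hbq, mul_zero]

theorem isConj_of_invUpTo {R : Type*} [NormedRing R] {a p q q' : R} (hp : IsIdempotentElem p)
    (hq : IsIdempotentElem q) (hq' : IsIdempotentElem q') (h : InvUpTo a p q)
    (h' : InvUpTo a p q') : IsConj q q' := by
  obtain ⟨b, hb, hqf⟩ := h.exists_mul_mul_eq_and_isConj hp hq
  obtain ⟨b', hb', hq'f'⟩ := h'.exists_mul_mul_eq_and_isConj hp hq'
  exact (hqf.trans (isConj_one_sub_mul_of_mul_mul_eq hb hb')).trans hq'f'.symm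

theorem mvnEquiv_of_invUpTo_pair (a p q q' : A) (hp : IsProjE p) (hq : IsProjE q)
    (hq' : IsProjE q') (h1 : InvUpTo a p q) (h2 : InvUpTo a p q') :
    ∃ v : A, v * star v = q ∧ star v * v = q' := by
  let : CStarAlgebra A := { }
  let := CStarAlgebra.spectralOrder A
  let := CStarAlgebra.spectralOrderedRing A
  obtain ⟨u, hu, huq⟩ := exists_unitary_mul_eq_mul_of_isConj hq.2 hq'.2
    (isConj_of_invUpTo hp.1 hq.1 hq'.1 h1 h2)
  exact exists_mul_star_eq_and_star_mul_eq_of_mem_unitary hu ⟨hq.1, hq.2⟩ huq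
end

section
/- Let A be a von Neumann algebra on H, let N, M be closed subspaces with P_N, P_M ∈ A, and let D ∈ A. Then D is invertible up to the pair (I−P_N, I−P_M) in A if and only if the compression P_M D restricted to N is a bijective bounded operator from N onto M. -/
/-!
After `1 - (1 - P) = P`, the three equations say that `b` vanishes off `M`, maps into `N`, and
restricted to `M` is a two-sided inverse of the compression `x ↦ P_M D x : N → M`. Hence they
force that compression to be bijective. Conversely, since `N` and `M` are closed, the open mapping
theorem makes the inverse of a bijective compression bounded, and extending it by `0` on `M⊥`
gives such a `b`. This `b` lies in `A` by the double commutant theorem: a relative inverse of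
`P_M D P_N` commutes with every operator commuting with `D`, `P_N` and `P_M`.
-/

variable {H : Type*} [NormedAddCommGroup H] [InnerProductSpace ℂ H] [CompleteSpace H]

/-- `P` is the orthogonal projection of `H` onto the subspace `K`. -/
def IsOrthProjOnto (P : H →L[ℂ] H) (K : Submodule ℂ H) : Prop :=
  P * P = P ∧ star P = P ∧ LinearMap.range (P : H →ₗ[ℂ] H) = K

/-- `a` is invertible up to the pair of projections `(p, q)`, with witness in `S`. -/
def InvUpToIn {R : Type*} [Ring R] [StarRing R] (S : Set R) (a p q : R) : Prop :=
  ∃ b ∈ S, b = (1 - p) * b * (1 - q) ∧ (1 - q) * a * (1 - p) * b = 1 - q ∧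
    b * ((1 - q) * a * (1 - p)) = 1 - p

theorem Commute.of_relInverse {R : Type*} [Semigroup R] {a b p q z : R}
    (hp : IsIdempotentElem p) (hq : IsIdempotentElem q) (hb : b = p * b * q)
    (hba : b * a = p) (hab : a * b = q)
    (hzp : Commute z p) (hzq : Commute z q) (hza : Commute z a) : Commute z b := by
  have hpb : p * b = b := by rw [hb, ← mul_assoc, ← mul_assoc, hp.eq]
  have hbq : b * q = b := by rw [hb, mul_assoc _ q q, hq.eq]
  calc z * b = z * p * b := by rw [mul_assoc, hpb]
    _ = b * (a * z) * b := by rw [hzp.eq, ← hba, mul_assoc b]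
    _ = b * z * q := by rw [← hza.eq, mul_assoc, mul_assoc, hab, mul_assoc]
    _ = b * z := by rw [mul_assoc, hzq.eq, ← mul_assoc, hbq]

theorem VonNeumannAlgebra.mem_of_relInverse (A : VonNeumannAlgebra H) {a b p q : H →L[ℂ] H}
    (ha : a ∈ A) (hpA : p ∈ A) (hqA : q ∈ A) (hp : IsIdempotentElem p)
    (hq : IsIdempotentElem q) (hb : b = p * b * q) (hba : b * a = p) (hab : a * b = q) :
    b ∈ A := by
  rw [← SetLike.mem_coe, ← A.centralizer_centralizer]
  exact Set.mem_centralizer_iff.2 fun z hz =>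
    (Commute.of_relInverse hp hq hb hba hab (hz p hpA).symm (hz q hqA).symm (hz a ha).symm).eq

theorem invUpToIn_one_sub_one_sub_iff {R : Type*} [Ring R] [StarRing R] {S : Set R}
    {a p q : R} :
    InvUpToIn S a (1 - p) (1 - q) ↔
      ∃ b ∈ S, b = p * b * q ∧ q * a * p * b = q ∧ b * (q * a * p) = p := by
  simp only [InvUpToIn, sub_sub_cancel]

namespace IsOrthProjOnto

variable {P : H →L[ℂ] H} {K : Submodule ℂ H}

theorem isIdempotentElem (h : IsOrthProjOnto P K) : IsIdempotentElem P := h.1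

theorem apply_mem (h : IsOrthProjOnto P K) (x : H) : P x ∈ K :=
  h.2.2 ▸ LinearMap.mem_range_self (P : H →ₗ[ℂ] H) x

theorem apply_of_mem (h : IsOrthProjOnto P K) {x : H} (hx : x ∈ K) : P x = x := by
  obtain ⟨y, rfl⟩ := h.2.2 ▸ hx
  exact congrArg (· y) h.isIdempotentElem.eq

theorem isClosed (h : IsOrthProjOnto P K) : IsClosed (K : Set H) := by
  have hK : (K : Set H) = {x | P x = x} :=
    Set.ext fun x => ⟨h.apply_of_mem, fun hx => hx ▸ h.apply_mem x⟩
  exact hK ▸ isClosed_eq P.continuous continuous_id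

end IsOrthProjOnto

section Compression

variable {N M : Submodule ℂ H} {PN PM : H →L[ℂ] H} {D : H →L[ℂ] H}

theorem injOn_and_image_eq_of_relInverse (hPN : IsOrthProjOnto PN N)
    (hPM : IsOrthProjOnto PM M) {b : H →L[ℂ] H} (hb : b = PN * b * PM)
    (hright : PM * D * PN * b = PM) (hleft : b * (PM * D * PN) = PN) :
    Set.InjOn (PM * D) (N : Set H) ∧ (PM * D) '' (N : Set H) = (M : Set H) := by
  have hinv : ∀ x ∈ N, b ((PM * D) x) = x := fun x hx => by
    simpa [hPN.apply_of_mem hx] using congrArg (· x) hleft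
  refine ⟨fun x hx y hy hxy => by rw [← hinv x hx, ← hinv y hy, hxy], ?_⟩
  refine Set.Subset.antisymm (Set.image_subset_iff.2 fun x _ => hPM.apply_mem (D x)) ?_
  intro y hy
  have hbN : b y ∈ N := by
    rw [hb]
    exact hPN.apply_mem _
  refine ⟨b y, hbN, ?_⟩
  simpa [hPN.apply_of_mem hbN, hPM.apply_of_mem hy] using congrArg (· y) hright

theorem exists_relInverse_of_injOn_of_image_eq (hPN : IsOrthProjOnto PN N)
    (hPM : IsOrthProjOnto PM M) (hinj : Set.InjOn (PM * D) (N : Set H))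
    (himg : (PM * D) '' (N : Set H) = (M : Set H)) :
    ∃ b : H →L[ℂ] H, b = PN * b * PM ∧ PM * D * PN * b = PM ∧ b * (PM * D * PN) = PN := by
  have : CompleteSpace N := hPN.isClosed.completeSpace_coe
  have : CompleteSpace M := hPM.isClosed.completeSpace_coe
  let f : N →L[ℂ] M := ((PM * D).comp N.subtypeL).codRestrict M fun x => hPM.apply_mem _
  have hker : f.ker = ⊥ := LinearMap.ker_eq_bot.2 fun x y hxy =>
    Subtype.ext (hinj x.2 y.2 (congrArg Subtype.val hxy))
  have hrange : f.range = ⊤ := LinearMap.range_eq_top.2 fun y => by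
    obtain ⟨x, hx, hxy⟩ : (y : H) ∈ (PM * D) '' N := himg ▸ y.2
    exact ⟨⟨x, hx⟩, Subtype.ext hxy⟩
  let e := ContinuousLinearEquiv.ofBijective f hker hrange
  let b : H →L[ℂ] H :=
    N.subtypeL.comp ((e.symm : M →L[ℂ] N).comp (PM.codRestrict M hPM.apply_mem))
  have hb : ∀ x, b x = (e.symm ⟨PM x, hPM.apply_mem x⟩ : H) := fun _ => rfl
  have hbM : ∀ y (hy : y ∈ M), b y = (e.symm ⟨y, hy⟩ : H) := fun y hy =>
    congrArg (fun z => (e.symm z : H)) (Subtype.ext (hPM.apply_of_mem hy))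
  have hbN : ∀ x, b x ∈ N := fun x => (e.symm _).2
  refine ⟨b, ?_, ?_, ?_⟩
  · ext x
    rw [mul_apply_eq_comp, mul_apply_eq_comp, hbM _ (hPM.apply_mem x), ← hb,
      hPN.apply_of_mem (hbN x)]
  · ext x
    simp only [mul_apply_eq_comp]
    rw [hPN.apply_of_mem (hbN x), hb]
    exact congrArg Subtype.val (e.apply_symm_apply _)
  · ext x
    simp only [mul_apply_eq_comp]
    rw [hbM _ (hPM.apply_mem _)]
    exact congrArg Subtype.val (e.symm_apply_apply ⟨PN x, hPN.apply_mem x⟩)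

end Compression

/-- `D` is invertible up to `(I - P_N, I - P_M)` in `A` iff the compression `P_M D`
restricted to `N` is a bounded bijection from `N` onto `M`. -/
theorem invUpTo_iff_compression_bijective (A : VonNeumannAlgebra H)
    (N M : Submodule ℂ H) (PN PM : H →L[ℂ] H)
    (hPN : IsOrthProjOnto PN N) (hPNA : PN ∈ A)
    (hPM : IsOrthProjOnto PM M) (hPMA : PM ∈ A)
    (D : H →L[ℂ] H) (hD : D ∈ A) :
    InvUpToIn (A : Set (H →L[ℂ] H)) D (1 - PN) (1 - PM) ↔
      (Set.InjOn (PM * D) (N : Set H) ∧ (PM * D) '' (N : Set H) = (M : Set H)) := by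
  rw [invUpToIn_one_sub_one_sub_iff]
  constructor
  · rintro ⟨b, -, hb, hright, hleft⟩
    exact injOn_and_image_eq_of_relInverse hPN hPM hb hright hleft
  · rintro ⟨hinj, himg⟩
    obtain ⟨b, hb, hright, hleft⟩ := exists_relInverse_of_injOn_of_image_eq hPN hPM hinj himg
    have hbA : b ∈ A := A.mem_of_relInverse (A.mul_mem (A.mul_mem hPMA hD) hPNA) hPNA hPMA
      hPN.isIdempotentElem hPM.isIdempotentElem hb hleft hright
    exact ⟨b, hbA, hb, hright, hleft⟩
end

section
/- Let A be a von Neumann algebra on H, let N, M be closed subspaces with P_N, P_M ∈ A, and let D ∈ A. Then D is left invertible up to (I−P_N, I−P_M) in A (i.e., there is S ∈ A with S·P_M D P_N = P_N) if and only if P_M D restricted to N is bounded below on N. -/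
/-! If `S (P_M D P_N) = P_N`, then `‖x‖ ≤ ‖S‖ ‖P_M D x‖` for `x ∈ N`. Conversely, if `T = P_M D P_N`
is bounded below on `N`, the operator `T⋆T + (1 - P_N)` is coercive, hence invertible, and its
inverse lies in `A` because `A` equals its bicommutant. Then `S = P_N (T⋆T + 1 - P_N)⁻¹ T⋆` is a left
inverse of `T` up to `P_N`. -/

variable {H : Type*} [NormedAddCommGroup H] [InnerProductSpace ℂ H] [CompleteSpace H]

open ContinuousLinearMap

lemma IsOrthProjOnto.exists_eq_starProjection {P : H →L[ℂ] H} {K : Submodule ℂ H}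
    (h : IsOrthProjOnto P K) : ∃ _ : K.HasOrthogonalProjection, P = K.starProjection := by
  obtain ⟨hidem, hsa, rfl⟩ := h
  exact isStarProjection_iff_eq_starProjection_range.mp ⟨hidem, hsa⟩

lemma VonNeumannAlgebra.units_inv_mem (A : VonNeumannAlgebra H) {u : (H →L[ℂ] H)ˣ}
    (hu : (u : H →L[ℂ] H) ∈ A) : ((u⁻¹ : (H →L[ℂ] H)ˣ) : H →L[ℂ] H) ∈ A := by
  have : (↑u⁻¹ : H →L[ℂ] H) ∈ Set.centralizer (Set.centralizer (A : Set (H →L[ℂ] H))) :=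
    fun z hz ↦ (Commute.units_inv_left (hz u hu)).eq.symm
  rwa [A.centralizer_centralizer] at this

lemma ContinuousLinearMap.isUnit_star_mul_self_add_star_mul_self {T Q : H →L[ℂ] H} {c : ℝ}
    (hc : 0 < c) (h : ∀ x, c * ‖x‖ ^ 2 ≤ ‖T x‖ ^ 2 + ‖Q x‖ ^ 2) :
    IsUnit (star T * T + star Q * Q) := by
  refine isUnit_of_forall_le_norm_inner_map _ (c := ⟨c, hc.le⟩) hc fun x ↦ ?_
  have hre : RCLike.re (inner ℂ ((star T * T + star Q * Q) x) x) = ‖T x‖ ^ 2 + ‖Q x‖ ^ 2 := by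
    simp only [star_eq_adjoint, apply_norm_sq_eq_inner_adjoint_left, add_apply, inner_add_left,
      map_add]
    rfl
  calc ‖x‖ ^ 2 * c ≤ ‖T x‖ ^ 2 + ‖Q x‖ ^ 2 := by linarith [h x]
    _ = _ := hre.symm
    _ ≤ _ := RCLike.re_le_norm _

lemma mul_inv_mul_star_mul_self_of_isIdempotentElem {R : Type*} [Ring R] [StarRing R] {p t : R}
    (hp : IsIdempotentElem p) (ht : t * p = t) (u : Rˣ)
    (hu : (u : R) = star t * t + star (1 - p) * (1 - p)) : p * ↑u⁻¹ * star t * t = p := by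
  have hup : (u : R) * p = star t * t := by
    rw [hu, add_mul, mul_assoc, ht, mul_assoc, sub_mul, one_mul, hp.eq, sub_self, mul_zero,
      add_zero]
  rw [mul_assoc _ (star t), ← hup, mul_assoc p, Units.inv_mul_cancel_left, hp.eq]

lemma Submodule.isUnit_star_mul_self_add_of_bounded_below (K : Submodule ℂ H)
    [K.HasOrthogonalProjection] {T : H →L[ℂ] H} {c : ℝ} (hc : 0 < c)
    (hT : ∀ x ∈ K, c * ‖x‖ ≤ ‖T x‖) :
    IsUnit (star (T * K.starProjection) * (T * K.starProjection) +
      star (1 - K.starProjection) * (1 - K.starProjection)) := by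
  refine isUnit_star_mul_self_add_star_mul_self (c := min (c ^ 2) 1) (by positivity) fun x ↦ ?_
  have hPx : c ^ 2 * ‖K.starProjection x‖ ^ 2 ≤ ‖(T * K.starProjection) x‖ ^ 2 := by
    rw [← mul_pow]
    exact pow_le_pow_left₀ (by positivity) (hT _ (K.starProjection_apply_mem x)) 2
  rw [← K.starProjection_orthogonal', K.norm_sq_eq_add_norm_sq_starProjection x]
  nlinarith [min_le_left (c ^ 2) 1, min_le_right (c ^ 2) 1, sq_nonneg ‖K.starProjection x‖,
    sq_nonneg ‖Kᗮ.starProjection x‖]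

/-- `D` is left invertible up to `(I - P_N, I - P_M)` in `A` iff the compression `P_M D`
is bounded below on `N`. -/
theorem left_invUpTo_iff_bounded_below (A : VonNeumannAlgebra H)
    (N M : Submodule ℂ H) (PN PM : H →L[ℂ] H)
    (hPN : IsOrthProjOnto PN N) (hPNA : PN ∈ A)
    (hPM : IsOrthProjOnto PM M) (hPMA : PM ∈ A)
    (D : H →L[ℂ] H) (hD : D ∈ A) :
    (∃ S ∈ A, S = PN * S * PM ∧ S * (PM * D * PN) = PN) ↔
      ∃ c : ℝ, 0 < c ∧ ∀ x ∈ N, c * ‖x‖ ≤ ‖(PM * D) x‖ := by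
  obtain ⟨_, rfl⟩ := hPN.exists_eq_starProjection
  constructor
  · rintro ⟨S, -, -, hS⟩
    refine ⟨(‖S‖ + 1)⁻¹, by positivity, fun x hx ↦ ?_⟩
    have hx' : S ((PM * D) x) = x := by
      simpa [N.starProjection_eq_self_iff.mpr hx] using congr($hS x)
    rw [inv_mul_le_iff₀ (by positivity)]
    calc ‖x‖ = ‖S ((PM * D) x)‖ := by rw [hx']
      _ ≤ ‖S‖ * ‖(PM * D) x‖ := S.le_opNorm _
      _ ≤ (‖S‖ + 1) * ‖(PM * D) x‖ := by gcongr; linarith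
  · rintro ⟨c, hc, hbb⟩
    set P := N.starProjection
    set T := PM * D * P
    have hTA : T ∈ A := mul_mem (mul_mem hPMA hD) hPNA
    obtain ⟨u, hu⟩ := N.isUnit_star_mul_self_add_of_bounded_below hc hbb
    have huA : (u : H →L[ℂ] H) ∈ A := by
      have hQA : 1 - P ∈ A := sub_mem (one_mem A) hPNA
      rw [hu]
      exact add_mem (mul_mem (star_mem hTA) hTA) (mul_mem (star_mem hQA) hQA)
    refine ⟨P * ↑u⁻¹ * star T, mul_mem (mul_mem hPNA (A.units_inv_mem huA)) (star_mem hTA),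
      ?_, ?_⟩
    · have hTPM : star T * PM = star T := by
        rw [← hPM.2.1, ← star_mul, ← mul_assoc, ← mul_assoc, hPM.1]
      rw [mul_assoc P _ PM, mul_assoc (P * ↑u⁻¹), hTPM, ← mul_assoc, ← mul_assoc, hPN.1]
    · have hTP : T * P = T := by rw [mul_assoc, hPN.1]
      exact mul_inv_mul_star_mul_self_of_isIdempotentElem hPN.1 hTP u hu
end

section
/- Let A be a unital C*-algebra, p a projection in A, and a ∈ A. If there exist projections q, s in A such that a is invertible up to (p,q), qa(1−p) = 0, p ≤ s, and 1−s is invertible up to (q,s), then a is left invertible up to (p,p), i.e., there exists c ∈ A with c = (1−p)c(1−p) and c(1−p)a(1−p) = 1−p. -/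
variable {A : Type*} [NormedRing A] [StarRing A] [CStarRing A] [CompleteSpace A]
  [NormedAlgebra ℂ A] [StarModule ℂ A]

theorem left_invUpTo_of_triangular (a p q s : A) (hp : IsProjE p) (hq : IsProjE q)
    (hs : IsProjE s) (h1 : InvUpTo a p q) (h2 : q * a * (1 - p) = 0)
    (hps : p * s = p) (hsp : s * p = p) (h3 : InvUpTo (1 - s) q s) :
    ∃ c : A, c = (1 - p) * c * (1 - p) ∧ c * ((1 - p) * a * (1 - p)) = 1 - p := by
  obtain ⟨b, hb1, hb2, hb3⟩ := h1
  obtain ⟨c', hc1, hc2, hc3⟩ := h3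
  have hpp : (1 - p) * (1 - p) = 1 - p := by
    have := hp.1
    noncomm_ring [this]
  have hss : (1 - s) * (1 - s) = 1 - s := by
    have := hs.1
    noncomm_ring [this]
  have hsp' : (1 - s) * (1 - p) = 1 - s := by
    noncomm_ring [hsp]
  -- c' * (1 - s) = c'
  have hc's : c' * (1 - s) = c' := by
    calc c' * (1 - s) = (1 - q) * c' * (1 - s) * (1 - s) := by rw [← hc1]
      _ = (1 - q) * c' * ((1 - s) * (1 - s)) := by rw [mul_assoc]
      _ = (1 - q) * c' * (1 - s) := by rw [hss]
      _ = c' := hc1.symm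
  -- c' * (1 - q) = 1 - q
  have hc'q : c' * (1 - q) = 1 - q := by
    have h := hc3
    rw [hss] at h
    rw [← mul_assoc, hc's] at h
    exact h
  -- c' * (1 - p) = c'
  have hc'p : c' * (1 - p) = c' := by
    rw [← hc's, mul_assoc, hsp', hc's]
  -- (1 - p) * b = b
  have hpb : (1 - p) * b = b := by
    calc (1 - p) * b = (1 - p) * ((1 - p) * b * (1 - q)) := by rw [← hb1]
      _ = (1 - p) * (1 - p) * b * (1 - q) := by rw [← mul_assoc, ← mul_assoc]
      _ = (1 - p) * b * (1 - q) := by rw [hpp]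
      _ = b := hb1.symm
  -- (1 - q) * (a * (1 - p)) = a * (1 - p)
  have hqa : (1 - q) * (a * (1 - p)) = a * (1 - p) := by
    have h2' : q * (a * (1 - p)) = 0 := by rw [← mul_assoc]; exact h2
    rw [sub_mul, one_mul, h2', sub_zero]
  refine ⟨b * c', ?_, ?_⟩
  · rw [← mul_assoc, hpb, mul_assoc, hc'p]
  · calc b * c' * ((1 - p) * a * (1 - p))
        = b * (c' * (1 - p)) * (a * (1 - p)) := by
          rw [mul_assoc, mul_assoc, mul_assoc, mul_assoc]
      _ = b * c' * (a * (1 - p)) := by rw [hc'p]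
      _ = b * c' * ((1 - q) * (a * (1 - p))) := by rw [hqa]
      _ = b * (c' * (1 - q)) * (a * (1 - p)) := by
          rw [mul_assoc, mul_assoc, mul_assoc]
      _ = b * ((1 - q) * (a * (1 - p))) := by rw [hc'q, mul_assoc]
      _ = b * ((1 - q) * a * (1 - p)) := by rw [mul_assoc]
      _ = 1 - p := hb3
end

section
/- Let A be a unital C*-algebra, p a projection in A, and a ∈ A. If there exist projections q, s in A such that a is invertible up to (s,q), qa(1−s) = 0, p ≤ s, and 1−p is invertible up to (q,p), then a is right invertible up to (p,p), i.e., there exists c ∈ A with c = (1−p)c(1−p) and (1−p)a(1−p)c = 1−p. -/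
variable {A : Type*} [NormedRing A] [StarRing A] [CStarRing A] [CompleteSpace A]
  [NormedAlgebra ℂ A] [StarModule ℂ A]

theorem right_invUpTo_of_triangular (a p q s : A) (hp : IsProjE p) (hq : IsProjE q)
    (hs : IsProjE s) (h1 : InvUpTo a s q) (h2 : q * a * (1 - s) = 0)
    (hps : p * s = p) (hsp : s * p = p) (h3 : InvUpTo (1 - p) q p) :
    ∃ c : A, c = (1 - p) * c * (1 - p) ∧ (1 - p) * a * (1 - p) * c = 1 - p := by
  obtain ⟨b, hb, hb1, hb2⟩ := h1
  obtain ⟨c', hc', hc1, hc2⟩ := h3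
  have hqq : (1 - q) * (1 - q) = 1 - q := by
    rw [sub_mul, one_mul, mul_sub, mul_one, hq.1]; abel
  have hpp : (1 - p) * (1 - p) = 1 - p := by
    rw [sub_mul, one_mul, mul_sub, mul_one, hp.1]; abel
  -- (1-p)*(1-s) = 1-s since p ≤ s
  have hps' : (1 - p) * (1 - s) = 1 - s := by
    rw [sub_mul, one_mul, mul_sub, mul_one, hps]; abel
  -- (1-p)*b = b
  have hpb : (1 - p) * b = b := by
    conv_lhs => rw [hb]
    rw [← mul_assoc, ← mul_assoc, hps', ← hb]
  -- b*(1-q) = b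
  have hbq : b * (1 - q) = b := by
    conv_lhs => rw [hb]
    rw [mul_assoc, hqq, ← hb]
  -- a*(1-s) = (1-q)*a*(1-s)
  have hqa : a * (1 - s) = (1 - q) * a * (1 - s) := by
    have key : (1 - q) * a * (1 - s) = a * (1 - s) - q * a * (1 - s) := by
      rw [sub_mul, one_mul, sub_mul]
    rw [key, h2, sub_zero]
  -- a*b = 1-q
  have hab : a * b = 1 - q := by
    calc a * b = a * ((1 - s) * b * (1 - q)) := by rw [← hb]
    _ = (a * (1 - s)) * b * (1 - q) := by noncomm_ring
    _ = ((1 - q) * a * (1 - s)) * b * (1 - q) := by rw [hqa]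
    _ = ((1 - q) * a * (1 - s) * b) * (1 - q) := by noncomm_ring
    _ = (1 - q) * (1 - q) := by rw [hb1]
    _ = 1 - q := hqq
  -- (1-q)*c' = c' and c'*(1-p) = c'
  have hqc : (1 - q) * c' = c' := by
    conv_lhs => rw [hc']
    rw [← mul_assoc, ← mul_assoc, hqq, ← hc']
  have hcp : c' * (1 - p) = c' := by
    conv_lhs => rw [hc']
    rw [mul_assoc, hpp, ← hc']
  -- (1-p)*c' = 1-p
  have hpc : (1 - p) * c' = 1 - p := by
    calc (1 - p) * c' = (1 - p) * ((1 - q) * c') := by rw [hqc]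
    _ = (1 - p) * (1 - p) * (1 - q) * c' := by rw [hpp]; noncomm_ring
    _ = 1 - p := hc1
  refine ⟨b * c', ?_, ?_⟩
  · rw [← mul_assoc, hpb, mul_assoc, hcp]
  · calc (1 - p) * a * (1 - p) * (b * c') = (1 - p) * a * ((1 - p) * b) * c' := by
          noncomm_ring
    _ = (1 - p) * (a * b) * c' := by rw [hpb]; noncomm_ring
    _ = (1 - p) * ((1 - q) * c') := by rw [hab]; noncomm_ring
    _ = 1 - p := by rw [hqc, hpc]
end
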